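/- The entropy of the tempered distribution never exceeds that of the original when τ ≤ 1: for P with full support on finite X and Q_τ(x) ∝ P(x)^{1/τ} with τ ∈ (0,1], H(Q_τ) ≤ H(P). -/

import Mathlib

/-!
Write `β = 1/τ ≥ 1`, so that `log Q = β log P - log Z` with `Z = ∑ P ^ β`. Adding Gibbs'
inequality for the pairs `(P, Q)` and `(Q, P)` gives
`0 ≤ ∑ (Q - P) (log Q - log P) = (β - 1) ∑ (Q - P) log P`, so for `β > 1` the cross entropy
`-∑ Q log P` is at most `H(P)`; Gibbs' inequality once more bounds `H(Q)` by that cross entropy.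
For `β = 1` the two distributions coincide.
-/

open Real Finset

section

variable {ι : Type*} [Fintype ι] {p q : ι → ℝ}

theorem sum_mul_log_le_sum_mul_log (hp : ∀ i, 0 < p i) (hq : ∀ i, 0 < q i)
    (hpq : ∑ i, q i ≤ ∑ i, p i) :
    ∑ i, p i * log (q i) ≤ ∑ i, p i * log (p i) := by
  have hterm : ∀ i, p i * log (q i) - p i * log (p i) ≤ q i - p i := fun i => by
    have hlog := log_le_sub_one_of_pos (div_pos (hq i) (hp i))
    rw [log_div (hq i).ne' (hp i).ne'] at hlog
    calc p i * log (q i) - p i * log (p i) = p i * (log (q i) - log (p i)) := by ring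
      _ ≤ p i * (q i / p i - 1) := mul_le_mul_of_nonneg_left hlog (hp i).le
      _ = q i - p i := by rw [mul_sub, mul_div_cancel₀ _ (hp i).ne', mul_one]
  have hsum := sum_le_sum fun i (_ : i ∈ univ) => hterm i
  rw [sum_sub_distrib, sum_sub_distrib] at hsum
  linarith

theorem sum_mul_log_le_sum_mul_log_of_log_eq (hp : ∀ i, 0 < p i) (hq : ∀ i, 0 < q i)
    (hps : ∑ i, p i = 1) (hqs : ∑ i, q i = 1) {β c : ℝ} (hβ : 1 < β)
    (hlog : ∀ i, log (q i) = β * log (p i) - c) :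
    ∑ i, p i * log (p i) ≤ ∑ i, q i * log (p i) := by
  have hpq := sum_mul_log_le_sum_mul_log hp hq (hqs.trans hps.symm).le
  have hqp := sum_mul_log_le_sum_mul_log hq hp (hps.trans hqs.symm).le
  have hterm : ∀ i, (q i - p i) * (log (q i) - log (p i))
      = (β - 1) * (q i * log (p i) - p i * log (p i)) - c * (q i - p i) := fun i => by
    rw [hlog]; ring
  have hsym : ∑ i, (q i - p i) * (log (q i) - log (p i))
      = (β - 1) * (∑ i, q i * log (p i) - ∑ i, p i * log (p i)) := by
    simp only [hterm, sum_sub_distrib, ← mul_sum, hps, hqs]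
    ring
  have hsym_nonneg : 0 ≤ ∑ i, (q i - p i) * (log (q i) - log (p i)) := by
    simp only [sub_mul, mul_sub, sum_sub_distrib]
    linarith
  rw [hsym] at hsym_nonneg
  linarith [nonneg_of_mul_nonneg_right hsym_nonneg (by linarith : (0 : ℝ) < β - 1)]

end

/-- The entropy of the tempered distribution `Q_τ(x) ∝ P(x)^(1/τ)`
never exceeds that of the original distribution when `τ ∈ (0,1]`. -/
theorem tempered_entropy_le_entropy
    {X : Type*} [Fintype X] [Nonempty X]
    (P : X → ℝ) (hPpos : ∀ x, 0 < P x) (hPsum : ∑ x, P x = 1)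
    (τ : ℝ) (hτ0 : 0 < τ) (hτ1 : τ ≤ 1)
    (Qτ : X → ℝ) (hQτ : ∀ x, Qτ x = P x ^ (1 / τ) / ∑ y, P y ^ (1 / τ)) :
    -∑ x, Qτ x * Real.log (Qτ x) ≤ -∑ x, P x * Real.log (P x) := by
  obtain rfl | hτ1 := hτ1.eq_or_lt
  · have hQ : Qτ = P := funext fun x => by simp [hQτ, hPsum]
    rw [hQ]
  set Z := ∑ y, P y ^ (1 / τ)
  have hZ : 0 < Z := sum_pos (fun y _ => rpow_pos_of_pos (hPpos y) _) univ_nonempty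
  have hQpos : ∀ x, 0 < Qτ x := fun x => hQτ x ▸ div_pos (rpow_pos_of_pos (hPpos x) _) hZ
  have hQsum : ∑ x, Qτ x = 1 := by
    simp only [hQτ]
    rw [← sum_div, div_self hZ.ne']
  have hlogQ : ∀ x, log (Qτ x) = 1 / τ * log (P x) - log Z := fun x => by
    rw [hQτ, log_div (rpow_pos_of_pos (hPpos x) _).ne' hZ.ne', log_rpow (hPpos x)]
  have hcross := sum_mul_log_le_sum_mul_log_of_log_eq hPpos hQpos hPsum hQsum
    (one_lt_one_div hτ0 hτ1) hlogQ
  have hgibbs := sum_mul_log_le_sum_mul_log hQpos hPpos (hPsum.trans hQsum.symm).le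
  linarith
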